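/- arXiv:math/0508281 — 3 statements merged into one kernel-verified Lean document; each statement's English description precedes it below -/
import Mathlib

section
/- For every real u, the scale mixture of normals in which μ given Θ = ϑ is N(0, ϑ^{-1} − 1) and Θ has the Beta(1/2, 1) distribution has density equal to the quasi-Cauchy density; that is, ∫₀¹ (1/2) ϑ^{-1/2} · (2π(ϑ^{-1} − 1))^{-1/2} exp(−u²/(2(ϑ^{-1} − 1))) dϑ = (2π)^{-1/2} (1 − |u| Φ̃(|u|)/φ(u)). -/
open MeasureTheory Real Filter Topology

/-- The standard normal density. -/
noncomputable def phi (x : ℝ) : ℝ := (Real.sqrt (2 * Real.pi))⁻¹ * Real.exp (-x ^ 2 / 2)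

/-- The standard normal cumulative distribution function. -/
noncomputable def Phi (x : ℝ) : ℝ := ∫ t in Set.Iic x, phi t

/-- The upper tail of the standard normal distribution. -/
noncomputable def PhiBar (x : ℝ) : ℝ := 1 - Phi x

/-- The quasi-Cauchy density. -/
noncomputable def quasiCauchy (u : ℝ) : ℝ :=
  (Real.sqrt (2 * Real.pi))⁻¹ * (1 - |u| * PhiBar |u| / phi u)

lemma sqrt_two_pi_pos : 0 < Real.sqrt (2 * Real.pi) := by
  have := Real.pi_pos; positivity

lemma continuous_phi : Continuous phi := by
  unfold phi; fun_prop

lemma integrable_phi : Integrable phi := by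
  have h : Integrable (fun x : ℝ => Real.exp (-(1/2 : ℝ) * x ^ 2)) :=
    integrable_exp_neg_mul_sq (by norm_num)
  have h2 := h.const_mul (Real.sqrt (2 * Real.pi))⁻¹
  refine h2.congr (Filter.Eventually.of_forall fun x => ?_)
  unfold phi; ring_nf

lemma integral_phi : ∫ x, phi x = 1 := by
  unfold phi
  rw [MeasureTheory.integral_const_mul]
  have h : ∫ x : ℝ, Real.exp (-(1/2 : ℝ) * x ^ 2) = Real.sqrt (π / (1/2)) :=
    integral_gaussian (1/2)
  have h2 : ∫ x : ℝ, Real.exp (-x ^ 2 / 2) = Real.sqrt (2 * π) := by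
    rw [show (2 : ℝ) * π = π / (1/2) by ring, ← h]
    congr 1; funext x; ring_nf
  rw [h2, inv_mul_cancel₀ sqrt_two_pi_pos.ne']

lemma hasDerivAt_Phi (x : ℝ) : HasDerivAt Phi (phi x) x := by
  have key : ∀ y, Phi y = Phi 0 + ∫ t in (0:ℝ)..y, phi t := by
    intro y
    rw [← intervalIntegral.integral_Iic_sub_Iic (integrable_phi.integrableOn)
      (integrable_phi.integrableOn)]
    unfold Phi; ring
  have hd : HasDerivAt (fun y => Phi 0 + ∫ t in (0:ℝ)..y, phi t) (phi x) x := by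
    refine HasDerivAt.const_add _ ?_
    exact intervalIntegral.integral_hasDerivAt_right
      (continuous_phi.intervalIntegrable _ _)
      (continuous_phi.stronglyMeasurable.stronglyMeasurableAtFilter)
      continuous_phi.continuousAt
  exact hd.congr_of_eventuallyEq (Filter.Eventually.of_forall fun y => (key y))

lemma continuous_Phi : Continuous Phi :=
  continuous_iff_continuousAt.2 fun x => (hasDerivAt_Phi x).continuousAt

lemma tendsto_Phi_atTop : Tendsto Phi atTop (𝓝 1) := by
  have h := (MeasureTheory.aecover_Iic (μ := (volume : Measure ℝ))
    (tendsto_id (α := ℝ))).integral_tendsto_of_countably_generated integrable_phi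
  rwa [integral_phi] at h

/-- The antiderivative. -/
noncomputable def Fqc (u ϑ : ℝ) : ℝ :=
  -((Real.sqrt (2 * Real.pi))⁻¹ * Real.sqrt (1 - ϑ) * Real.exp (-(u ^ 2 * ϑ) / (2 * (1 - ϑ))))
  + |u| * Real.exp (u ^ 2 / 2) * (1 - Phi (|u| / Real.sqrt (1 - ϑ)))

lemma hasDerivAt_Fqc (u : ℝ) {ϑ : ℝ} (h : ϑ ∈ Set.Ioo (0:ℝ) 1) :
    HasDerivAt (Fqc u)
      ((1/2) * (Real.sqrt (2 * Real.pi))⁻¹ * (Real.sqrt (1 - ϑ))⁻¹ *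
        Real.exp (-(u ^ 2 * ϑ) / (2 * (1 - ϑ)))) ϑ := by
  obtain ⟨h0, h1'⟩ := h
  have hs : (0:ℝ) < 1 - ϑ := by linarith
  have hS : 0 < Real.sqrt (1 - ϑ) := Real.sqrt_pos.2 hs
  have h1 : HasDerivAt (fun x : ℝ => 1 - x) (-1) ϑ := (hasDerivAt_id ϑ).const_sub 1
  have hsqrt : HasDerivAt (fun x : ℝ => Real.sqrt (1 - x)) (-1 / (2 * Real.sqrt (1 - ϑ))) ϑ :=
    h1.sqrt hs.ne'
  have hnum : HasDerivAt (fun x : ℝ => -(u ^ 2 * x)) (-(u ^ 2 * 1)) ϑ :=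
    ((hasDerivAt_id ϑ).const_mul (u ^ 2)).neg
  have hden : HasDerivAt (fun x : ℝ => 2 * (1 - x)) (2 * -1) ϑ := h1.const_mul 2
  have harg := hnum.div hden (by positivity : (2 * (1 - ϑ)) ≠ 0)
  have hexp := harg.exp
  have hA := ((hsqrt.const_mul ((Real.sqrt (2 * Real.pi))⁻¹)).mul hexp).neg
  have hinner := (hasDerivAt_const ϑ |u|).div hsqrt hS.ne'
  have hPhiC := (hasDerivAt_Phi (|u| / Real.sqrt (1 - ϑ))).comp ϑ hinner
  have hB := (hPhiC.const_sub 1).const_mul (|u| * Real.exp (u ^ 2 / 2))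
  have htot := hA.add hB
  refine htot.congr_deriv ?_
  symm
  simp only [phi, Pi.div_apply]
  rw [div_pow, sq_abs, Real.sq_sqrt hs.le]
  have key : Real.exp (-(u ^ 2 / (1 - ϑ)) / 2)
      = Real.exp (-(u ^ 2 * ϑ) / (2 * (1 - ϑ))) / Real.exp (u ^ 2 / 2) := by
    rw [eq_div_iff (Real.exp_ne_zero _), ← Real.exp_add]
    congr 1
    field_simp
    ring
  rw [key]
  set S := Real.sqrt (1 - ϑ) with hSdef
  rw [show ϑ = 1 - S ^ 2 by rw [hSdef, Real.sq_sqrt hs.le]; ring]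
  have hSne : S ≠ 0 := hS.ne'
  field_simp
  ring_nf
  simp only [sq_abs]
  ring_nf

lemma integrand_eq (u : ℝ) {ϑ : ℝ} (h : ϑ ∈ Set.Ioo (0:ℝ) 1) :
    (1 / 2) * (Real.sqrt ϑ)⁻¹ * (Real.sqrt (2 * Real.pi * (ϑ⁻¹ - 1)))⁻¹ *
        Real.exp (-u ^ 2 / (2 * (ϑ⁻¹ - 1)))
      = (1/2) * (Real.sqrt (2 * Real.pi))⁻¹ * (Real.sqrt (1 - ϑ))⁻¹ *
        Real.exp (-(u ^ 2 * ϑ) / (2 * (1 - ϑ))) := by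
  obtain ⟨h0, h1⟩ := h
  have hs : (0:ℝ) < 1 - ϑ := by linarith
  have hinv : ϑ⁻¹ - 1 = (1 - ϑ) / ϑ := by field_simp
  rw [hinv]
  have hexp : -u ^ 2 / (2 * ((1 - ϑ) / ϑ)) = -(u ^ 2 * ϑ) / (2 * (1 - ϑ)) := by
    rw [show 2 * ((1 - ϑ) / ϑ) = 2 * (1 - ϑ) / ϑ by ring, div_div_eq_mul_div]
    ring
  rw [hexp]
  have hπ := Real.pi_pos
  rw [show 2 * Real.pi * ((1 - ϑ) / ϑ) = 2 * Real.pi * (1 - ϑ) / ϑ by ring,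
    Real.sqrt_div (by positivity), Real.sqrt_mul (by positivity)]
  have e1 : Real.sqrt ϑ ≠ 0 := (Real.sqrt_pos.2 h0).ne'
  have e2 : Real.sqrt (1 - ϑ) ≠ 0 := (Real.sqrt_pos.2 hs).ne'
  have e3 : Real.sqrt (2 * Real.pi) ≠ 0 := sqrt_two_pi_pos.ne'
  field_simp

lemma intervalIntegrable_g (u : ℝ) :
    IntervalIntegrable (fun ϑ : ℝ => (1/2) * (Real.sqrt (2 * Real.pi))⁻¹ *
      (Real.sqrt (1 - ϑ))⁻¹ * Real.exp (-(u ^ 2 * ϑ) / (2 * (1 - ϑ)))) volume 0 1 := by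
  have hb : IntervalIntegrable (fun ϑ : ℝ => (1 - ϑ) ^ (-(1/2) : ℝ)) volume 0 1 := by
    have h1 := (intervalIntegral.intervalIntegrable_rpow' (a := 0) (b := 1) (r := -(1/2))
      (by norm_num)).comp_sub_left 1
    have h2 := h1.symm
    simpa using h2
  have hg := hb.const_mul ((1/2) * (Real.sqrt (2 * Real.pi))⁻¹)
  refine IntervalIntegrable.mono_fun hg ?_ ?_
  · apply Measurable.aestronglyMeasurable
    apply Measurable.mul
    · exact (measurable_const.mul
        ((Real.continuous_sqrt.measurable.comp (measurable_const.sub measurable_id)).inv))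
    · exact Real.measurable_exp.comp
        ((measurable_const.mul measurable_id).neg.div
          (measurable_const.mul (measurable_const.sub measurable_id)))
  · rw [Set.uIoc_of_le zero_le_one]
    refine (ae_restrict_iff' measurableSet_Ioc).2 (Filter.Eventually.of_forall ?_)
    intro x hx
    dsimp only
    rcases eq_or_lt_of_le hx.2 with hx1 | hx1
    · simp [hx1]
    · have hs : (0:ℝ) < 1 - x := by linarith
      have h0 : (0:ℝ) < x := hx.1
      have hE : Real.exp (-(u ^ 2 * x) / (2 * (1 - x))) ≤ 1 := by
        rw [Real.exp_le_one_iff]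
        apply div_nonpos_of_nonpos_of_nonneg
        · nlinarith [sq_nonneg u]
        · linarith
      have hrw : (1 - x) ^ (-(1/2) : ℝ) = (Real.sqrt (1 - x))⁻¹ := by
        rw [Real.rpow_neg hs.le, Real.sqrt_eq_rpow]
      rw [hrw, Real.norm_of_nonneg (by positivity), Real.norm_of_nonneg (by positivity)]
      calc (1/2) * (Real.sqrt (2 * Real.pi))⁻¹ * (Real.sqrt (1 - x))⁻¹ *
            Real.exp (-(u ^ 2 * x) / (2 * (1 - x)))
          ≤ (1/2) * (Real.sqrt (2 * Real.pi))⁻¹ * (Real.sqrt (1 - x))⁻¹ * 1 := by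
            apply mul_le_mul_of_nonneg_left hE
            positivity
        _ = (1/2) * (Real.sqrt (2 * Real.pi))⁻¹ * (Real.sqrt (1 - x))⁻¹ := by ring

lemma tendsto_Fqc_zero (u : ℝ) : Tendsto (Fqc u) (𝓝[>] (0:ℝ)) (𝓝 (Fqc u 0)) := by
  have hc : ContinuousAt (Fqc u) 0 := by
    unfold Fqc
    have c1 : ContinuousAt (fun ϑ : ℝ => -(u ^ 2 * ϑ) / (2 * (1 - ϑ))) 0 :=
      ContinuousAt.div (by fun_prop) (by fun_prop) (by norm_num)
    have csq : ContinuousAt (fun ϑ : ℝ => Real.sqrt (1 - ϑ)) 0 := by fun_prop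
    have c2 : ContinuousAt (fun ϑ : ℝ => |u| / Real.sqrt (1 - ϑ)) 0 :=
      ContinuousAt.div continuousAt_const csq (by norm_num)
    exact (((continuousAt_const.mul csq).mul (c1.rexp)).neg).add
      (continuousAt_const.mul (continuousAt_const.sub
        (continuous_Phi.continuousAt.comp c2)))
  exact hc.continuousWithinAt.tendsto

lemma tendsto_Fqc_one (u : ℝ) : Tendsto (Fqc u) (𝓝[<] (1:ℝ)) (𝓝 0) := by
  have hmem : Set.Ioo (0:ℝ) 1 ∈ 𝓝[<] (1:ℝ) :=
    Ioo_mem_nhdsLT_of_mem (Set.right_mem_Ioc.2 zero_lt_one)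
  have hsub : Tendsto (fun ϑ : ℝ => 1 - ϑ) (𝓝[<] (1:ℝ)) (𝓝 0) := by
    have h : Tendsto (fun ϑ : ℝ => 1 - ϑ) (𝓝 (1:ℝ)) (𝓝 ((1:ℝ) - 1)) :=
      Continuous.tendsto (by fun_prop) 1
    rw [sub_self] at h
    exact h.mono_left nhdsWithin_le_nhds
  have hsqrtTo : Tendsto (fun ϑ : ℝ => Real.sqrt (1 - ϑ)) (𝓝[<] (1:ℝ)) (𝓝 0) := by
    have h := (Real.continuous_sqrt.tendsto 0).comp hsub
    simpa [Function.comp_def] using h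
  have T1 : Tendsto (fun ϑ : ℝ =>
      -((Real.sqrt (2 * Real.pi))⁻¹ * Real.sqrt (1 - ϑ) *
        Real.exp (-(u ^ 2 * ϑ) / (2 * (1 - ϑ))))) (𝓝[<] (1:ℝ)) (𝓝 0) := by
    apply squeeze_zero_norm'
      (a := fun ϑ : ℝ => (Real.sqrt (2 * Real.pi))⁻¹ * Real.sqrt (1 - ϑ))
    · filter_upwards [hmem] with ϑ hϑ
      have hs : (0:ℝ) < 1 - ϑ := by linarith [hϑ.2]
      have hE : Real.exp (-(u ^ 2 * ϑ) / (2 * (1 - ϑ))) ≤ 1 := by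
        rw [Real.exp_le_one_iff]
        apply div_nonpos_of_nonpos_of_nonneg
        · nlinarith [sq_nonneg u, hϑ.1]
        · linarith
      rw [norm_neg, Real.norm_of_nonneg (by positivity)]
      calc (Real.sqrt (2 * Real.pi))⁻¹ * Real.sqrt (1 - ϑ) *
            Real.exp (-(u ^ 2 * ϑ) / (2 * (1 - ϑ)))
          ≤ (Real.sqrt (2 * Real.pi))⁻¹ * Real.sqrt (1 - ϑ) * 1 :=
            mul_le_mul_of_nonneg_left hE (by positivity)
        _ = (Real.sqrt (2 * Real.pi))⁻¹ * Real.sqrt (1 - ϑ) := by ring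
    · have h := hsqrtTo.const_mul (Real.sqrt (2 * Real.pi))⁻¹
      simpa using h
  have T2 : Tendsto (fun ϑ : ℝ =>
      |u| * Real.exp (u ^ 2 / 2) * (1 - Phi (|u| / Real.sqrt (1 - ϑ))))
      (𝓝[<] (1:ℝ)) (𝓝 0) := by
    rcases eq_or_ne u 0 with hu | hu
    · simpa [hu] using tendsto_const_nhds (α := ℝ) (x := (0:ℝ)) (f := 𝓝[<] (1:ℝ))
    · have htop : Tendsto (fun ϑ : ℝ => |u| / Real.sqrt (1 - ϑ)) (𝓝[<] (1:ℝ)) atTop := by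
        have hpos : Tendsto (fun ϑ : ℝ => Real.sqrt (1 - ϑ)) (𝓝[<] (1:ℝ)) (𝓝[>] 0) := by
          rw [tendsto_nhdsWithin_iff]
          refine ⟨hsqrtTo, ?_⟩
          filter_upwards [hmem] with ϑ hϑ
          exact Real.sqrt_pos.2 (by linarith [hϑ.2])
        have hinv := tendsto_inv_nhdsGT_zero.comp hpos
        have := hinv.const_mul_atTop (abs_pos.2 hu)
        simpa [div_eq_mul_inv, Function.comp] using this
      have hPhi := tendsto_Phi_atTop.comp htop
      have h := ((tendsto_const_nhds (x := (1:ℝ))).sub hPhi).const_mul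
        (|u| * Real.exp (u ^ 2 / 2))
      simpa using h
  have h := T1.add T2
  rw [add_zero] at h
  exact h

/-- The scale mixture of normals `μ | Θ = ϑ ~ N(0, ϑ⁻¹ - 1)` with `Θ ~ Beta(1/2, 1)`
has density equal to the quasi-Cauchy density. -/
theorem quasiCauchy_as_scale_mixture (u : ℝ) :
    ∫ ϑ in Set.Ioo (0 : ℝ) 1,
      (1 / 2) * (Real.sqrt ϑ)⁻¹ * (Real.sqrt (2 * Real.pi * (ϑ⁻¹ - 1)))⁻¹ *
        Real.exp (-u ^ 2 / (2 * (ϑ⁻¹ - 1)))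
      = quasiCauchy u := by
  rw [MeasureTheory.setIntegral_congr_fun measurableSet_Ioo
    (fun ϑ hϑ => integrand_eq u hϑ)]
  rw [← MeasureTheory.integral_Ioc_eq_integral_Ioo,
    ← intervalIntegral.integral_of_le zero_le_one]
  rw [intervalIntegral.integral_eq_sub_of_hasDerivAt_of_tendsto zero_lt_one
    (fun x hx => hasDerivAt_Fqc u hx) (intervalIntegrable_g u)
    (tendsto_Fqc_zero u) (tendsto_Fqc_one u)]
  have hφ : phi u ≠ 0 := by
    unfold phi
    positivity
  unfold Fqc quasiCauchy PhiBar phi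
  have e3 : Real.sqrt (2 * Real.pi) ≠ 0 := sqrt_two_pi_pos.ne'
  have hE : Real.exp (-u ^ 2 / 2) * Real.exp (u ^ 2 / 2) = 1 := by
    rw [← Real.exp_add, show -u ^ 2 / 2 + u ^ 2 / 2 = 0 by ring, Real.exp_zero]
  simp only [Real.sqrt_one, mul_zero, neg_zero, zero_div, Real.exp_zero, sub_zero,
    mul_one, div_one]
  have hE' : Real.exp (-(u ^ 2 / 2)) * Real.exp (u ^ 2 / 2) = 1 := by
    rw [← Real.exp_add, show -(u ^ 2 / 2) + u ^ 2 / 2 = 0 by ring, Real.exp_zero]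
  field_simp
  linear_combination - (Real.sqrt (2 * Real.pi) * |u| * (1 - Phi |u|)) * hE'
end

section
/- The quasi-Cauchy density γ is a symmetric unimodal probability density: γ(u) > 0 for all real u, γ(−u) = γ(u) for all u, γ is nonincreasing on [0, ∞), and ∫_ℝ γ(u) du = 1. -/
open MeasureTheory Real Filter

namespace QCaux

noncomputable def c : ℝ := (Real.sqrt (2 * Real.pi))⁻¹

lemma c_pos : 0 < c := by
  have : 0 < Real.sqrt (2 * Real.pi) := Real.sqrt_pos.2 (by positivity)
  exact inv_pos.2 this

lemma phi_def (x : ℝ) : phi x = c * Real.exp (-x ^ 2 / 2) := rfl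

lemma phi_pos (x : ℝ) : 0 < phi x := mul_pos c_pos (Real.exp_pos _)

lemma phi_neg (x : ℝ) : phi (-x) = phi x := by simp [phi, neg_pow]

lemma continuous_phi : Continuous phi := by
  unfold phi
  fun_prop

lemma integrable_phi : MeasureTheory.Integrable phi := by
  have h := (integrable_exp_neg_mul_sq (b := (2:ℝ)⁻¹) (by norm_num)).const_mul
      ((Real.sqrt (2 * Real.pi))⁻¹)
  refine h.congr ?_
  apply Filter.Eventually.of_forall
  intro x
  unfold phi
  ring_nf

lemma integral_phi : ∫ x, phi x = 1 := by
  have h : ∫ x : ℝ, Real.exp (-(2:ℝ)⁻¹ * x ^ 2) = Real.sqrt (Real.pi / 2⁻¹) :=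
    integral_gaussian (2:ℝ)⁻¹
  have h2 : ∫ x, phi x = (Real.sqrt (2 * Real.pi))⁻¹ * ∫ x : ℝ, Real.exp (-(2:ℝ)⁻¹ * x ^ 2) := by
    rw [← MeasureTheory.integral_const_mul]
    congr 1
    ext x
    unfold phi
    ring_nf
  rw [h2, h]
  have : Real.pi / 2⁻¹ = 2 * Real.pi := by ring
  rw [this]
  field_simp

lemma hasDerivAt_phi (x : ℝ) : HasDerivAt phi (-x * phi x) x := by
  have h1 : HasDerivAt (fun t : ℝ => -t ^ 2 / 2) (-x) x := by
    have := ((hasDerivAt_pow 2 x).neg.div_const 2)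
    refine this.congr_deriv ?_
    ring
  have := (h1.exp).const_mul c
  refine this.congr_deriv ?_
  rw [phi_def]
  ring


lemma hasDerivAt_Phi (x : ℝ) : HasDerivAt Phi (phi x) x := by
  have key : Phi = fun y => Phi 0 + ∫ t in (0:ℝ)..y, phi t := by
    funext y
    rw [← intervalIntegral.integral_Iic_sub_Iic integrable_phi.integrableOn
      integrable_phi.integrableOn]
    unfold Phi
    ring
  rw [key]
  exact (intervalIntegral.integral_hasDerivAt_right
    (integrable_phi.intervalIntegrable)
    (continuous_phi.stronglyMeasurable.stronglyMeasurableAtFilter)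
    continuous_phi.continuousAt).const_add _

lemma PhiBar_eq (x : ℝ) : PhiBar x = ∫ t in Set.Ioi x, phi t := by
  have := intervalIntegral.integral_Iic_add_Ioi (b := x)
    integrable_phi.integrableOn integrable_phi.integrableOn
  unfold PhiBar Phi
  rw [← integral_phi, ← this]
  ring

lemma PhiBar_pos (x : ℝ) : 0 < PhiBar x := by
  rw [PhiBar_eq]
  rw [MeasureTheory.setIntegral_pos_iff_support_of_nonneg_ae
    (Filter.Eventually.of_forall fun t => (phi_pos t).le) integrable_phi.integrableOn]
  have : Function.support phi = Set.univ := by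
    ext t; simp [Function.support, (phi_pos t).ne']
  rw [this, Set.univ_inter]
  simp [Real.volume_Ioi]

lemma hasDerivAt_PhiBar (x : ℝ) : HasDerivAt PhiBar (-phi x) x := by
  exact (hasDerivAt_Phi x).const_sub 1

lemma tendsto_phi : Filter.Tendsto phi Filter.atTop (nhds 0) := by
  have h1 : Filter.Tendsto (fun x : ℝ => -x ^ 2 / 2) Filter.atTop Filter.atBot := by
    apply Filter.Tendsto.atBot_div_const (by norm_num : (0:ℝ) < 2)
    exact tendsto_neg_atTop_atBot.comp (tendsto_pow_atTop (by norm_num))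
  have := (Real.tendsto_exp_atBot.comp h1).const_mul c
  have h2 : Filter.Tendsto (fun x : ℝ => c * Real.exp (-x ^ 2 / 2)) Filter.atTop (nhds 0) := by
    simpa [Function.comp] using this
  exact h2

lemma integrableOn_mul_phi {x : ℝ} (hx : 0 ≤ x) :
    MeasureTheory.IntegrableOn (fun t => t * phi t) (Set.Ioi x) := by
  apply integrableOn_Ioi_deriv_of_nonneg' (g := fun t => -phi t) (l := 0)
  · intro t _
    exact (hasDerivAt_phi t).neg.congr_deriv (by ring)
  · intro t ht
    exact mul_nonneg (le_trans hx (le_of_lt ht)) (phi_pos t).le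
  · simpa using tendsto_phi.neg

lemma integral_Ioi_mul_phi {x : ℝ} (hx : 0 ≤ x) :
    ∫ t in Set.Ioi x, t * phi t = phi x := by
  have := integral_Ioi_of_hasDerivAt_of_nonneg' (g := fun t => -phi t)
    (g' := fun t => t * phi t) (a := x) (l := 0)
    (fun t _ => by exact (hasDerivAt_phi t).neg.congr_deriv (by ring))
    (fun t ht => mul_nonneg (le_trans hx (le_of_lt (Set.mem_Ioi.1 ht))) (phi_pos t).le)
    (by simpa using tendsto_phi.neg)
  simpa using this


/-- strict upper Mills bound -/
lemma mills_strict {x : ℝ} (hx : 0 ≤ x) : x * PhiBar x < phi x := by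
  have hint1 : MeasureTheory.IntegrableOn (fun t => t * phi t) (Set.Ioi x) :=
    integrableOn_mul_phi hx
  have hint2 : MeasureTheory.IntegrableOn (fun t => x * phi t) (Set.Ioi x) :=
    (integrable_phi.integrableOn).const_mul x
  have hsub : MeasureTheory.IntegrableOn (fun t => (t - x) * phi t) (Set.Ioi x) := by
    exact (hint1.sub hint2).congr (Filter.Eventually.of_forall fun t => by simp; ring)
  have key : phi x - x * PhiBar x = ∫ t in Set.Ioi x, (t - x) * phi t := by
    rw [PhiBar_eq, ← integral_Ioi_mul_phi hx]
    rw [← MeasureTheory.integral_const_mul, ← MeasureTheory.integral_sub hint1 hint2]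
    congr 1; ext t; ring
  have step1 : ∫ t in Set.Ioi (x+1), (t - x) * phi t ≤ ∫ t in Set.Ioi x, (t - x) * phi t := by
    apply MeasureTheory.setIntegral_mono_set hsub
    · filter_upwards [MeasureTheory.ae_restrict_mem measurableSet_Ioi] with t ht
      exact mul_nonneg (by linarith [Set.mem_Ioi.1 ht]) (phi_pos t).le
    · apply Filter.Eventually.of_forall
      intro t ht
      exact lt_trans (by linarith) ht
  have step2 : PhiBar (x+1) ≤ ∫ t in Set.Ioi (x+1), (t - x) * phi t := by
    rw [PhiBar_eq]
    apply MeasureTheory.setIntegral_mono_on integrable_phi.integrableOn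
      (hsub.mono_set (Set.Ioi_subset_Ioi (by linarith))) measurableSet_Ioi
    intro t ht
    have h1 : 1 ≤ t - x := by linarith [Set.mem_Ioi.1 ht]
    nlinarith [phi_pos t]
  have := PhiBar_pos (x+1)
  nlinarith [key, step1, step2]

/-- nonstrict, for convenience -/
lemma mills_le {x : ℝ} (hx : 0 ≤ x) : x * PhiBar x ≤ phi x := (mills_strict hx).le

/-- lower Mills bound -/
lemma mills_lower {x : ℝ} (hx : 0 ≤ x) : x * phi x / (1 + x ^ 2) ≤ PhiBar x := by
  set g : ℝ → ℝ := fun t => phi t * (1 - 2 / (1 + t ^ 2) ^ 2) with hg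
  have hderiv : ∀ t : ℝ, HasDerivAt (fun t => -(t * phi t / (1 + t ^ 2))) (g t) t := by
    intro t
    have h1 := (hasDerivAt_id t).mul (hasDerivAt_phi t)
    have h2 : HasDerivAt (fun t : ℝ => 1 + t ^ 2) (2 * t) t := by
      simpa using ((hasDerivAt_pow 2 t).const_add 1)
    have hne : (1 + t ^ 2) ≠ 0 := by positivity
    have := (h1.div h2 hne).neg
    refine this.congr_deriv ?_
    have hne2 : ((1 + t ^ 2) ^ 2) ≠ 0 := by positivity
    simp only [hg, id_eq, Pi.mul_apply]
    field_simp [hg]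
    ring
  have habs : ∀ t : ℝ, |1 - 2 / (1 + t ^ 2) ^ 2| ≤ 1 := by
    intro t
    rw [abs_le]
    constructor
    · have h1 : (1:ℝ) ≤ (1 + t ^ 2) ^ 2 := by nlinarith [sq_nonneg t]
      have : 2 / (1 + t ^ 2) ^ 2 ≤ 2 := by
        rw [div_le_iff₀ (by positivity)]; nlinarith
      linarith
    · have : 0 < 2 / (1 + t ^ 2) ^ 2 := by positivity
      linarith
  have hgint : MeasureTheory.IntegrableOn g (Set.Ioi x) := by
    apply MeasureTheory.Integrable.mono (integrable_phi.integrableOn)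
    · exact ((continuous_phi.mul (by fun_prop (disch := intro t; positivity))).aestronglyMeasurable).restrict
    · filter_upwards with t
      rw [Real.norm_eq_abs, Real.norm_eq_abs, hg]
      simp only
      rw [abs_mul, abs_of_nonneg (phi_pos t).le]
      exact mul_le_of_le_one_right (phi_pos t).le (habs t)
  have htend : Filter.Tendsto (fun t : ℝ => -(t * phi t / (1 + t ^ 2))) Filter.atTop (nhds 0) := by
    have hb : ∀ᶠ t : ℝ in Filter.atTop, ‖t * phi t / (1 + t ^ 2)‖ ≤ ‖phi t‖ := by
      filter_upwards [Filter.eventually_ge_atTop (0:ℝ)] with t ht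
      rw [Real.norm_eq_abs, Real.norm_eq_abs, abs_div, abs_mul,
        abs_of_nonneg ht, abs_of_nonneg (phi_pos t).le, abs_of_pos (by positivity : (0:ℝ) < 1 + t^2)]
      rw [div_le_iff₀ (by positivity)]
      nlinarith [mul_nonneg (phi_pos t).le (sq_nonneg (t-1)), mul_nonneg (phi_pos t).le ht]
    have hb' : ∀ᶠ t : ℝ in Filter.atTop, ‖-(t * phi t / (1 + t ^ 2))‖ ≤ phi t := by
      filter_upwards [hb] with t ht
      rw [norm_neg]
      exact le_trans ht (le_of_eq (Real.norm_eq_abs _ ▸ abs_of_nonneg (phi_pos t).le))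
    exact squeeze_zero_norm' hb' tendsto_phi
  have hFTC := integral_Ioi_of_hasDerivAt_of_tendsto'
    (f := fun t => -(t * phi t / (1 + t ^ 2))) (f' := g) (a := x) (m := 0)
    (fun t _ => hderiv t) hgint htend
  have hle : ∫ t in Set.Ioi x, g t ≤ ∫ t in Set.Ioi x, phi t :=
    MeasureTheory.setIntegral_mono hgint integrable_phi.integrableOn
      (fun t => by
        show phi t * (1 - 2 / (1 + t ^ 2) ^ 2) ≤ phi t
        have h2 : 0 < 2 / (1 + t ^ 2) ^ 2 := by positivity
        nlinarith [phi_pos t])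
  rw [PhiBar_eq]
  calc x * phi x / (1 + x ^ 2) = 0 - -(x * phi x / (1 + x ^ 2)) := by ring
    _ = ∫ t in Set.Ioi x, g t := hFTC.symm
    _ ≤ ∫ t in Set.Ioi x, phi t := hle


lemma exp_mul_phi (u : ℝ) : Real.exp (u ^ 2 / 2) * phi u = c := by
  rw [phi_def, mul_comm c, ← mul_assoc, ← Real.exp_add]
  have h : u ^ 2 / 2 + -u ^ 2 / 2 = 0 := by ring
  rw [h, Real.exp_zero, one_mul]

noncomputable def F (u : ℝ) : ℝ := Real.exp (u ^ 2 / 2) * PhiBar u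

lemma hasDerivAt_F (u : ℝ) : HasDerivAt F (u * F u - c) u := by
  have h1 : HasDerivAt (fun u : ℝ => Real.exp (u ^ 2 / 2)) (u * Real.exp (u ^ 2 / 2)) u := by
    have h0 : HasDerivAt (fun u : ℝ => u ^ 2 / 2) u u := by
      simpa using (hasDerivAt_pow 2 u).div_const 2
    simpa [mul_comm] using h0.exp
  have := h1.mul (hasDerivAt_PhiBar u)
  refine this.congr_deriv ?_
  have := exp_mul_phi u
  unfold F
  nlinarith [this]

lemma F_pos (u : ℝ) : 0 < F u := mul_pos (Real.exp_pos _) (PhiBar_pos u)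

lemma tendsto_F : Filter.Tendsto F Filter.atTop (nhds 0) := by
  have hg : Filter.Tendsto (fun u : ℝ => c * u⁻¹) Filter.atTop (nhds 0) := by
    simpa using tendsto_inv_atTop_zero.const_mul c
  apply squeeze_zero' (Filter.Eventually.of_forall fun u => (F_pos u).le) _ hg
  filter_upwards [Filter.eventually_gt_atTop (0:ℝ)] with u hu
  have h1 : u * PhiBar u ≤ phi u := (mills_strict hu.le).le
  have h2 : PhiBar u ≤ phi u / u := by
    rw [le_div_iff₀ hu]; linarith [h1]
  calc F u ≤ Real.exp (u ^ 2 / 2) * (phi u / u) :=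
        mul_le_mul_of_nonneg_left h2 (Real.exp_pos _).le
    _ = c * u⁻¹ := by rw [← exp_mul_phi u]; field_simp
    
lemma quasiCauchy_eq {u : ℝ} (hu : 0 ≤ u) : quasiCauchy u = c - u * F u := by
  unfold quasiCauchy F
  rw [abs_of_nonneg hu]
  have hp := (phi_pos u).ne'
  have h := exp_mul_phi u
  rw [show (Real.sqrt (2 * Real.pi))⁻¹ = c from rfl]
  field_simp
  linear_combination (u * PhiBar u) * h

lemma quasiCauchy_abs (u : ℝ) : quasiCauchy |u| = quasiCauchy u := by
  unfold quasiCauchy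
  rw [abs_abs]
  have : phi |u| = phi u := by unfold phi; rw [sq_abs]
  rw [this]

lemma quasiCauchy_pos (u : ℝ) : 0 < quasiCauchy u := by
  rw [← quasiCauchy_abs, quasiCauchy_eq (abs_nonneg u)]
  set x := |u| with hx
  have h := mills_strict (abs_nonneg u)
  have h2 : x * F x < c := by
    calc x * F x = Real.exp (x ^ 2 / 2) * (x * PhiBar x) := by unfold F; ring
      _ < Real.exp (x ^ 2 / 2) * phi x := by
          exact mul_lt_mul_of_pos_left h (Real.exp_pos _)
      _ = c := exp_mul_phi x
  linarith

lemma monotoneOn_E : MonotoneOn (fun u => u * F u) (Set.Ici (0:ℝ)) := by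
  have hderiv : ∀ u : ℝ, HasDerivAt (fun u => u * F u) (F u + u * (u * F u - c)) u := by
    intro u
    exact ((hasDerivAt_id u).mul (hasDerivAt_F u)).congr_deriv (by simp)
  apply monotoneOn_of_deriv_nonneg (convex_Ici 0)
  · have hPB : Continuous PhiBar :=
      continuous_iff_continuousAt.2 fun x => (hasDerivAt_PhiBar x).continuousAt
    have hF : Continuous F := (Real.continuous_exp.comp (by fun_prop)).mul hPB
    exact (continuous_id.mul hF).continuousOn
  · intro u _
    exact (hderiv u).differentiableAt.differentiableWithinAt
  · intro u hu
    rw [interior_Ici] at hu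
    rw [(hderiv u).deriv]
    have hu0 : (0:ℝ) ≤ u := le_of_lt hu
    have hml := mills_lower hu0
    have key : c * u ≤ (1 + u ^ 2) * F u := by
      have h1 : u * phi u ≤ (1 + u ^ 2) * PhiBar u := by
        rw [div_le_iff₀ (by positivity : (0:ℝ) < 1 + u ^ 2)] at hml
        linarith [hml]
      calc c * u = Real.exp (u ^ 2 / 2) * (u * phi u) := by
            rw [show Real.exp (u ^ 2 / 2) * (u * phi u) = u * (Real.exp (u^2/2) * phi u) by ring,
              exp_mul_phi u]; ring
        _ ≤ Real.exp (u ^ 2 / 2) * ((1 + u ^ 2) * PhiBar u) :=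
            mul_le_mul_of_nonneg_left h1 (Real.exp_pos _).le
        _ = (1 + u ^ 2) * F u := by unfold F; ring
    nlinarith [key]


lemma Phi_zero : Phi 0 = 1 / 2 := by
  have hsplit : Phi 0 + (∫ t in Set.Ioi (0:ℝ), phi t) = 1 := by
    rw [← integral_phi]
    exact intervalIntegral.integral_Iic_add_Ioi integrable_phi.integrableOn
      integrable_phi.integrableOn
  have hsym : (∫ t in Set.Iic (0:ℝ), phi t) = ∫ t in Set.Ioi (0:ℝ), phi t := by
    rw [← neg_zero, ← integral_comp_neg_Iic]
    simp only [phi_neg, neg_zero]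
  unfold Phi at *
  linarith [hsplit, hsym]

lemma integral_Ioi_quasiCauchy : ∫ u in Set.Ioi (0:ℝ), quasiCauchy u = 1 / 2 := by
  have hderiv : ∀ x ∈ Set.Ioi (0:ℝ), HasDerivAt (fun u => -F u) (quasiCauchy x) x := by
    intro x hx
    have := (hasDerivAt_F x).neg
    refine this.congr_deriv ?_
    rw [quasiCauchy_eq (le_of_lt (Set.mem_Ioi.1 hx))]
    ring
  have hcont : ContinuousWithinAt (fun u => -F u) (Set.Ici (0:ℝ)) 0 :=
    ((hasDerivAt_F 0).continuousAt.neg).continuousWithinAt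
  have htend : Filter.Tendsto (fun u => -F u) Filter.atTop (nhds 0) := by
    simpa using tendsto_F.neg
  have := integral_Ioi_of_hasDerivAt_of_nonneg hcont hderiv
    (fun x _ => (quasiCauchy_pos x).le) htend
  rw [this]
  have : F 0 = PhiBar 0 := by unfold F; norm_num
  rw [this]
  unfold PhiBar
  rw [Phi_zero]
  norm_num


end QCaux

open QCaux in
/-- The quasi-Cauchy density is a symmetric unimodal probability density. -/
theorem quasiCauchy_symmetric_unimodal_density :
    (∀ u : ℝ, 0 < quasiCauchy u) ∧
    (∀ u : ℝ, quasiCauchy (-u) = quasiCauchy u) ∧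
    AntitoneOn quasiCauchy (Set.Ici (0 : ℝ)) ∧
    (∫ u : ℝ, quasiCauchy u) = 1 := by
  refine ⟨quasiCauchy_pos, ?_, ?_, ?_⟩
  · intro u
    rw [← quasiCauchy_abs u, ← quasiCauchy_abs (-u), abs_neg]
  · intro a ha b hb hab
    rw [quasiCauchy_eq (Set.mem_Ici.1 ha), quasiCauchy_eq (Set.mem_Ici.1 hb)]
    have h2 : a * F a ≤ b * F b := monotoneOn_E ha hb hab
    linarith
  · have h1 : (∫ u : ℝ, quasiCauchy u) = ∫ u : ℝ, quasiCauchy |u| := by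
      congr 1; funext u; rw [quasiCauchy_abs]
    rw [h1, integral_comp_abs, integral_Ioi_quasiCauchy]
    norm_num
end

section
/- Let 0 ≤ λ < 1, let μ > 0, and let h : ℝ → ℝ be a measurable nondecreasing function with |h(z)| ≤ λ|z| for all real z. If Z ~ N(μ, 1), then E[(h(Z) − μ)²] ≥ E[(h(Z) − μ)² 1{Z < μ}] ≥ (1/2)(1 − λ)² μ². -/
open MeasureTheory ProbabilityTheory Real

lemma integrable_sq_gaussianReal (μ : ℝ) :
    Integrable (fun z : ℝ => z ^ 2) (gaussianReal μ 1) := by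
  rw [gaussianReal_of_var_ne_zero μ one_ne_zero,
    integrable_withDensity_iff (measurable_gaussianPDF μ 1)
      (ae_of_all _ fun x => ENNReal.ofReal_lt_top)]
  have htr : ∀ x, (gaussianPDF μ 1 x).toReal = gaussianPDFReal μ 1 x := fun x =>
    ENNReal.toReal_ofReal (gaussianPDFReal_nonneg μ 1 x)
  simp only [htr]
  -- gaussianPDFReal μ 1 x = (√(2π))⁻¹ * exp (-(x-μ)^2 / 2)
  have key : Integrable (fun y : ℝ => (y + μ) ^ 2 * Real.exp (-(2:ℝ)⁻¹ * y ^ 2)) := by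
    have A : Integrable (fun y : ℝ => y ^ 2 * Real.exp (-(2:ℝ)⁻¹ * y ^ 2)) := by
      have := integrable_rpow_mul_exp_neg_mul_sq (b := (2:ℝ)⁻¹) (by norm_num)
        (s := 2) (by norm_num)
      refine this.congr (ae_of_all _ fun y => ?_)
      have hy : y ^ (2:ℝ) = y ^ (2:ℕ) := by
        rw [← Real.rpow_natCast y 2]; norm_num
      simp only [hy]
    have B : Integrable (fun y : ℝ => y * Real.exp (-(2:ℝ)⁻¹ * y ^ 2)) :=
      integrable_mul_exp_neg_mul_sq (by norm_num)
    have C : Integrable (fun y : ℝ => Real.exp (-(2:ℝ)⁻¹ * y ^ 2)) :=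
      integrable_exp_neg_mul_sq (by norm_num)
    have := (A.add ((B.const_mul (2 * μ)))).add (C.const_mul (μ ^ 2))
    refine this.congr (ae_of_all _ fun y => ?_)
    simp only [Pi.add_apply]
    ring
  have key2 : Integrable (fun x : ℝ => (x - μ + μ) ^ 2 *
      Real.exp (-(2:ℝ)⁻¹ * (x - μ) ^ 2)) := key.comp_sub_right μ
  have := key2.const_mul ((Real.sqrt (2 * Real.pi))⁻¹)
  refine this.congr (ae_of_all _ fun x => ?_)
  simp only [gaussianPDFReal, NNReal.coe_one, mul_one]
  rw [show x - μ + μ = x by ring]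
  rw [show -(x - μ) ^ 2 / 2 = -(2:ℝ)⁻¹ * (x - μ) ^ 2 by ring]
  ring

lemma gaussianReal_Iio_mean (μ : ℝ) :
    ((gaussianReal μ 1) (Set.Iio μ)).toReal = 1 / 2 := by
  -- reduce to standard gaussian
  have hmap : (gaussianReal 0 1).map (· + μ) = gaussianReal μ 1 := by
    rw [gaussianReal_map_add_const μ, zero_add]
  have h1 : (gaussianReal μ 1) (Set.Iio μ) = (gaussianReal 0 1) (Set.Iio 0) := by
    rw [← hmap, Measure.map_apply (measurable_id'.add_const μ) measurableSet_Iio]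
    congr 1
    ext x
    simp only [Set.mem_preimage, Set.mem_Iio, Set.mem_Ioi]
    constructor <;> intro hx <;> linarith
  -- symmetry: Iio 0 and Ioi 0 have same measure
  have hneg : (gaussianReal 0 1).map (fun x : ℝ => (-1) * x) = gaussianReal 0 1 := by
    rw [gaussianReal_map_const_mul (-1)]
    norm_num
  have h2 : (gaussianReal 0 1) (Set.Iio 0) = (gaussianReal 0 1) (Set.Ioi 0) := by
    conv_lhs => rw [← hneg]
    rw [Measure.map_apply (measurable_const_mul (-1)) measurableSet_Iio]
    congr 1
    ext x
    simp only [Set.mem_preimage, Set.mem_Iio, Set.mem_Ioi]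
    constructor <;> intro hx <;> linarith
  have h0 : (gaussianReal 0 1) ({(0:ℝ)}) = 0 := by
    refine gaussianReal_absolutelyContinuous 0 one_ne_zero ?_
    simp
  have hcompl : (gaussianReal 0 1) (Set.Iio 0 ∪ Set.Ioi 0) = 1 := by
    have : Set.Iio (0:ℝ) ∪ Set.Ioi 0 = {(0:ℝ)}ᶜ := by
      ext x; simp [lt_or_lt_iff_ne]
    rw [this, measure_compl (measurableSet_singleton 0) (measure_ne_top _ _), h0,
      measure_univ, tsub_zero]
  have hunion : (gaussianReal 0 1) (Set.Iio 0) + (gaussianReal 0 1) (Set.Ioi 0) = 1 := by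
    rw [← measure_union ((Set.Iic_disjoint_Ioi le_rfl).mono Set.Iio_subset_Iic_self le_rfl) measurableSet_Ioi, hcompl]
  rw [← h2] at hunion
  have hne : (gaussianReal 0 1) (Set.Iio 0) ≠ ⊤ := measure_ne_top _ _
  have htr : ((gaussianReal 0 1) (Set.Iio 0)).toReal
      + ((gaussianReal 0 1) (Set.Iio 0)).toReal = 1 := by
    rw [← ENNReal.toReal_add hne hne, hunion, ENNReal.toReal_one]
  rw [h1]
  linarith

/-- If `Z ~ N(μ, 1)` with `μ > 0`, and `h` is a nondecreasing measurable function with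
`|h(z)| ≤ λ|z|` for some `0 ≤ λ < 1`, then
`E[(h(Z) − μ)²] ≥ E[(h(Z) − μ)² 1{Z < μ}] ≥ (1/2)(1 − λ)² μ²`. -/
theorem shrinkage_risk_lower_bound (lam μ : ℝ) (hlam0 : 0 ≤ lam) (hlam1 : lam < 1)
    (hμ : 0 < μ) (h : ℝ → ℝ) (hmeas : Measurable h) (hmono : Monotone h)
    (hbound : ∀ z : ℝ, |h z| ≤ lam * |z|) :
    (∫ z, (h z - μ) ^ 2 ∂(gaussianReal μ 1))
        ≥ ∫ z in Set.Iio μ, (h z - μ) ^ 2 ∂(gaussianReal μ 1) ∧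
    (∫ z in Set.Iio μ, (h z - μ) ^ 2 ∂(gaussianReal μ 1))
        ≥ (1 / 2) * (1 - lam) ^ 2 * μ ^ 2 := by
  have hint : Integrable (fun z => (h z - μ) ^ 2) (gaussianReal μ 1) := by
    have hg : Integrable (fun z : ℝ => 2 * lam ^ 2 * z ^ 2 + 2 * μ ^ 2)
        (gaussianReal μ 1) :=
      ((integrable_sq_gaussianReal μ).const_mul _).add (integrable_const _)
    refine hg.mono' ((hmeas.sub measurable_const).pow_const 2).aestronglyMeasurable
      (ae_of_all _ fun z => ?_)
    have hb := hbound z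
    have h1 : |h z| ^ 2 ≤ (lam * |z|) ^ 2 := by
      apply pow_le_pow_left₀ (abs_nonneg _) hb
    rw [Real.norm_eq_abs, abs_of_nonneg (sq_nonneg _)]
    have h2 : h z ^ 2 ≤ lam ^ 2 * z ^ 2 := by
      rw [← sq_abs (h z)]
      calc |h z| ^ 2 ≤ (lam * |z|) ^ 2 := h1
        _ = lam ^ 2 * z ^ 2 := by rw [mul_pow, sq_abs]
    nlinarith [sq_nonneg (h z + μ)]
  constructor
  · exact setIntegral_le_integral hint (ae_of_all _ fun z => sq_nonneg _)
  · have hpt : ∀ z ∈ Set.Iio μ, ((1 - lam) * μ) ^ 2 ≤ (h z - μ) ^ 2 := by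
      intro z hz
      have hzμ : z < μ := hz
      have h1 : h z ≤ h μ := hmono hzμ.le
      have h2 : h μ ≤ lam * μ := by
        have := hbound μ
        rw [abs_of_pos hμ] at this
        exact (le_abs_self _).trans this
      have h3 : h z - μ ≤ -((1 - lam) * μ) := by linarith
      have h4 : 0 ≤ (1 - lam) * μ := mul_nonneg (by linarith) hμ.le
      nlinarith
    have hmono' : ∫ z in Set.Iio μ, ((1 - lam) * μ) ^ 2 ∂(gaussianReal μ 1)
        ≤ ∫ z in Set.Iio μ, (h z - μ) ^ 2 ∂(gaussianReal μ 1) :=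
      setIntegral_mono_on (integrableOn_const (measure_ne_top _ _))
        (hint.integrableOn) measurableSet_Iio hpt
    have hconst : ∫ z in Set.Iio μ, ((1 - lam) * μ) ^ 2 ∂(gaussianReal μ 1)
        = ((1 - lam) * μ) ^ 2 * (1 / 2) := by
      rw [setIntegral_const, smul_eq_mul, measureReal_def, gaussianReal_Iio_mean, mul_comm]
    rw [hconst] at hmono'
    calc (1 / 2) * (1 - lam) ^ 2 * μ ^ 2 = ((1 - lam) * μ) ^ 2 * (1 / 2) := by ring
      _ ≤ _ := hmono'
end
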